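/- Let Ω = (G, 𝒞) be a linear biased graph with no balanced loops, v ∈ V(G), and let Ω̂ = (Ĝ, 𝒞̂) be the v-deleted biased graph obtained from Ω. Then for every cycle Ĉ in Ĝ, if the pull-back 𝔈(Ĉ) is an unbalanced cycle in Ω, then Ĉ is an unbalanced cycle in Ω̂. -/

import Mathlib

open Finset
open scoped symmDiff Classical

/-- A multigraph: each edge carries an unordered pair of endpoints. -/
structure Multigraph (V : Type*) (E : Type*) where
  ends : E → Sym2 V

namespace Multigraph

variable {V E : Type*} (G : Multigraph V E)

/-- Edge `e` is incident with vertex `w`. -/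
def Inc (e : E) (w : V) : Prop := w ∈ G.ends e

/-- `e` is a loop. -/
def IsLoopEdge (e : E) : Prop := (G.ends e).IsDiag

/-- Multiplicity of a vertex in an edge: `2` for a loop at the vertex, `1` if incident,
`0` otherwise. -/
noncomputable def mult (e : E) (w : V) : ℕ :=
  if G.ends e = Sym2.diag w then 2 else if w ∈ G.ends e then 1 else 0

/-- Degree of `w` with respect to the edge set `A` (loops counted twice). -/
noncomputable def deg (A : Finset E) (w : V) : ℕ := ∑ e ∈ A, G.mult e w

/-- Two edges of `A` sharing a vertex. -/
def AdjIn (A : Finset E) (e f : E) : Prop :=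
  e ∈ A ∧ f ∈ A ∧ ∃ w, G.Inc e w ∧ G.Inc f w

/-- The edge set `A` induces a connected subgraph. -/
def EdgeConnected (A : Finset E) : Prop :=
  ∀ e ∈ A, ∀ f ∈ A, Relation.ReflTransGen (G.AdjIn A) e f

/-- `A` is the edge set of a cycle: nonempty, connected, and every vertex has degree
`0` or `2` in `A`. -/
def IsCycle (A : Finset E) : Prop :=
  A.Nonempty ∧ G.EdgeConnected A ∧ ∀ w, G.deg A w = 0 ∨ G.deg A w = 2

/-- The set of vertices met by the edge set `A`. -/
def Supp (A : Finset E) : Set V := { w | ∃ e ∈ A, G.Inc e w }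

/-- `A` is the edge set of a path from `u` to `w`. -/
def IsPath (A : Finset E) (u w : V) : Prop :=
  u ≠ w ∧ G.EdgeConnected A ∧ G.deg A u = 1 ∧ G.deg A w = 1 ∧
    ∀ x, x ≠ u → x ≠ w → (G.deg A x = 0 ∨ G.deg A x = 2)

/-- Vertices joined by a walk using edges of `A`. -/
def Reach (A : Finset E) (a b : V) : Prop :=
  Relation.ReflTransGen (fun x y => ∃ e ∈ A, G.Inc e x ∧ G.Inc e y) a b

/-- `T` is a spanning tree: every pair of vertices is joined by `T` and `T` contains
no cycle. -/
def IsSpanningTree (T : Finset E) : Prop :=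
  (∀ a b : V, G.Reach T a b) ∧ ∀ C ⊆ T, ¬ G.IsCycle C

/-- `C` is the fundamental cycle of the edge `e` with respect to the spanning tree `T`. -/
def IsFundCycle (T : Finset E) (e : E) (C : Finset E) : Prop :=
  G.IsCycle C ∧ e ∈ C ∧ C ⊆ insert e T

end Multigraph

/-- Symmetric difference of a list of finsets. -/
def listSymmDiff {E : Type*} [DecidableEq E] (L : List (Finset E)) : Finset E :=
  L.foldr (· ∆ ·) ∅

/-- A linear biased graph: a multigraph together with a class `Bal` of *balanced* cycles
satisfying the theta property and closed under taking cycles that are symmetric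
differences of balanced cycles. -/
structure LinearBiasedGraph (V E : Type*) [DecidableEq E] where
  G : Multigraph V E
  Bal : Set (Finset E)
  bal_cycle : ∀ C ∈ Bal, G.IsCycle C
  theta : ∀ C₁ C₂ C₃ : Finset E, G.IsCycle C₁ → G.IsCycle C₂ → G.IsCycle C₃ →
    C₃ = C₁ ∆ C₂ → C₁ ∈ Bal → C₂ ∈ Bal → C₃ ∈ Bal
  linear : ∀ L : List (Finset E), (∀ D ∈ L, D ∈ Bal) →
    ∀ C : Finset E, G.IsCycle C → C = listSymmDiff L → C ∈ Bal

namespace LinearBiasedGraph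

variable {V E : Type*} [DecidableEq E] (Ω : LinearBiasedGraph V E)

/-- Independent sets of the frame matroid `M(Ω)`: edge sets containing no balanced cycle
and no two distinct cycles lying in a common component. -/
def FrameIndep (A : Finset E) : Prop :=
  (∀ C ⊆ A, Ω.G.IsCycle C → C ∉ Ω.Bal) ∧
  ∀ C₁ C₂ : Finset E, C₁ ⊆ A → C₂ ⊆ A → Ω.G.IsCycle C₁ → Ω.G.IsCycle C₂ → C₁ ≠ C₂ →
    ∀ e₁ ∈ C₁, ∀ e₂ ∈ C₂, ¬ Relation.ReflTransGen (Ω.G.AdjIn A) e₁ e₂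

/-- Bases of the frame matroid `M(Ω)`: maximal independent sets. -/
def FrameBase (B : Finset E) : Prop :=
  Ω.FrameIndep B ∧ ∀ A : Finset E, Ω.FrameIndep A → B ⊆ A → A = B

/-- Circuits of the frame matroid `M(Ω)`: minimal dependent sets. -/
def FrameCircuit (C : Finset E) : Prop :=
  ¬ Ω.FrameIndep C ∧ ∀ C' ⊂ C, Ω.FrameIndep C'

variable {κ : ℕ}

/-- A single symmetric exchange between two members of a sequence of bases. -/
def SymExchStep (𝓑 𝓑' : Fin κ → Finset E) : Prop :=
  ∃ i j : Fin κ, i ≠ j ∧ ∃ e ∈ 𝓑 i, ∃ f ∈ 𝓑 j,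
    Ω.FrameBase (insert f (𝓑 i \ {e})) ∧ Ω.FrameBase (insert e (𝓑 j \ {f})) ∧
    𝓑' i = insert f (𝓑 i \ {e}) ∧ 𝓑' j = insert e (𝓑 j \ {f}) ∧
    ∀ t : Fin κ, t ≠ i → t ≠ j → 𝓑' t = 𝓑 t

/-- `𝓑'` is obtained from `𝓑` by a finite sequence of symmetric exchanges. -/
def ExchReachable (𝓑 𝓑' : Fin κ → Finset E) : Prop :=
  Relation.ReflTransGen Ω.SymExchStep 𝓑 𝓑'

end LinearBiasedGraph

section VDeletion

open Multigraph

/-- Data of the `v`-deleted biased graph `Ω̂ = (Ĝ, 𝒞̂)` obtained from a linear biased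
graph `Ω = (G, 𝒞)` by deleting the vertex `v`.  The vertex type of `Ĝ` is taken to be
`V` with `v` isolated; `E'` is the edge type of `Ĝ`.  The edges of `G` not incident with
`v` embed into `Ĝ` via `old`; the edges incident with `v` are `ev 0, …, ev (m-1)`, with
`ev i = v –– w i` (a loop at `v` when `w i = v`), and for each valid pair `i ≠ j` the new
edge `eh_{ij} = ehat i j` joins `w i` and `w j` (a stem loop when exactly one of `ev i`,
`ev j` is a loop).  `pull` is the pull-back map `𝔈` on edges. -/
structure VDeletion (V E E' : Type*) [DecidableEq V] [DecidableEq E] [DecidableEq E'] where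
  Ω : LinearBiasedGraph V E
  v : V
  Ωhat : LinearBiasedGraph V E'
  old : {e : E // ¬ Ω.G.Inc e v} ↪ E'
  m : ℕ
  ev : Fin m → E
  ev_inj : Function.Injective ev
  ev_inc : ∀ i, Ω.G.Inc (ev i) v
  ev_surj : ∀ e : E, Ω.G.Inc e v → ∃ i, ev i = e
  w : Fin m → V
  ev_ends : ∀ i, Ω.G.ends (ev i) = s(v, w i)
  ehat : Fin m → Fin m → E'
  ehat_symm : ∀ i j, ehat i j = ehat j i
  ehat_ne_old : ∀ i j e, i ≠ j → ¬(w i = v ∧ w j = v) → ehat i j ≠ old e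
  ehat_inj : ∀ i j k l, i ≠ j → k ≠ l → ¬(w i = v ∧ w j = v) → ¬(w k = v ∧ w l = v) →
    ehat i j = ehat k l → ({i, j} : Finset (Fin m)) = {k, l}
  edges_covered : ∀ eh : E', (∃ e, eh = old e) ∨
    ∃ i j, i ≠ j ∧ ¬(w i = v ∧ w j = v) ∧ eh = ehat i j
  old_ends : ∀ e : {e : E // ¬ Ω.G.Inc e v}, Ωhat.G.ends (old e) = Ω.G.ends e.1
  ehat_ends : ∀ i j, i ≠ j → ¬(w i = v ∧ w j = v) →
    Ωhat.G.ends (ehat i j) =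
      if w i = v then s(w j, w j) else if w j = v then s(w i, w i) else s(w i, w j)
  v_isolated : ∀ eh : E', ¬ Ωhat.G.Inc eh v
  pull : E' → Finset E
  pull_old : ∀ e, pull (old e) = {e.1}
  pull_ehat : ∀ i j, i ≠ j → ¬(w i = v ∧ w j = v) → pull (ehat i j) = {ev i, ev j}

namespace VDeletion

variable {V E E' : Type*} [DecidableEq V] [DecidableEq E] [DecidableEq E']
  [Fintype E]
  (D : VDeletion V E E')

/-- The pull-back `𝔈(F̂)` of an edge set of `Ĝ`: the symmetric difference of the
pull-backs of its edges, i.e. the set of edges of `G` lying in an odd number of them. -/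
noncomputable def pullSet (F : Finset E') : Finset E :=
  Finset.univ.filter fun x => Odd ((F.filter fun eh => x ∈ D.pull eh).card)

/-- `eh` is a stem loop of `Ĝ`. -/
def IsStemLoopEdge (eh : E') : Prop :=
  ∃ i j, i ≠ j ∧ eh = D.ehat i j ∧ Xor' (D.w i = D.v) (D.w j = D.v)

/-- The collection `𝒜̂` of cycles of `Ĝ`:  cycles `Ch` which are not stem loops and are
either old balanced cycles of `Ω`, or have empty pull-back, or use a new edge, have
nonempty pull-back and all petals of the pull-back balanced. -/
def Ahat : Set (Finset E') :=
  { Ch | D.Ωhat.G.IsCycle Ch ∧ (¬ ∃ eh, D.IsStemLoopEdge eh ∧ Ch = {eh}) ∧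
      (((∀ eh ∈ Ch, ∃ e, eh = D.old e) ∧ D.pullSet Ch ∈ D.Ω.Bal) ∨
        D.pullSet Ch = ∅ ∨
        ((∃ eh ∈ Ch, ∀ e, eh ≠ D.old e) ∧ (D.pullSet Ch).Nonempty ∧
          ∀ P ⊆ D.pullSet Ch, D.Ω.G.IsCycle P → P ∈ D.Ω.Bal)) }

/-- `𝒜̂'`: the collection `𝒜̂` with all (balanced) loops removed. -/
def Ahat' : Set (Finset E') :=
  { Ch ∈ D.Ahat | ¬ ∃ eh, Ch = {eh} ∧ D.Ωhat.G.IsLoopEdge eh }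

/-- The edge set of the subgraph `Ĥ_I` of `Ĝ` induced by the edges `eh_{ij}`, `i, j ∈ I`. -/
noncomputable def EH (I : Finset (Fin D.m)) : Finset E' :=
  ((I ×ˢ I).filter fun p => p.1 ≠ p.2 ∧ ¬(D.w p.1 = D.v ∧ D.w p.2 = D.v)).image
    fun p => D.ehat p.1 p.2

/-- `F̂_I(Bh)`: the edges `eh` of `Ĥ_I` for which `(Bh \ E(Ĥ_I)) ∪ {eh}` is a base of `M̂`. -/
noncomputable def Fhat (I : Finset (Fin D.m)) (Bh : Finset E') : Finset E' :=
  (D.EH I).filter fun eh => D.Ωhat.FrameBase (insert eh (Bh \ D.EH I))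

end VDeletion

end VDeletion

section AuxMultigraph

namespace Multigraph

variable {V E : Type*} {G : Multigraph V E}

lemma mult_diag' {e : E} {u : V} (h : G.ends e = s(u, u)) : G.mult e u = 2 := by
  simp [mult, h, Sym2.diag]

lemma mult_pair_left {e : E} {u x : V} (h : G.ends e = s(u, x)) (hne : u ≠ x) :
    G.mult e u = 1 := by
  simp [mult, h, Sym2.diag, Sym2.eq_iff, hne.symm, hne]

lemma mult_pair_right {e : E} {u x : V} (h : G.ends e = s(u, x)) (hne : u ≠ x) :
    G.mult e x = 1 :=
  mult_pair_left (by rw [h, Sym2.eq_swap]) hne.symm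

lemma mult_eq_zero_of_not_inc {e : E} {u : V} (h : ¬ G.Inc e u) : G.mult e u = 0 := by
  rw [mult, if_neg, if_neg (show ¬ u ∈ G.ends e from h)]
  intro hd
  exact h (by rw [Inc, hd]; exact Sym2.mem_mk_left u u)

lemma mult_pair_other {e : E} {u x y : V} (h : G.ends e = s(u, x))
    (h1 : y ≠ u) (h2 : y ≠ x) : G.mult e y = 0 := by
  apply mult_eq_zero_of_not_inc
  rw [Inc, h, Sym2.mem_iff]
  rintro (rfl | rfl) <;> simp at h1 h2

lemma one_le_mult_of_inc {e : E} {u : V} (h : G.Inc e u) : 1 ≤ G.mult e u := by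
  rw [mult]
  split_ifs with h1 h2
  · omega
  · omega
  · exact absurd h h2

lemma mult_eq_of_ends_eq {E₂ : Type*} {G₂ : Multigraph V E₂} {e : E} {e₂ : E₂}
    (h : G.ends e = G₂.ends e₂) (w : V) : G.mult e w = G₂.mult e₂ w := by
  rw [mult, mult, h]

lemma deg_singleton (e : E) (w : V) : G.deg {e} w = G.mult e w :=
  Finset.sum_singleton _ _

lemma deg_insert {A : Finset E} {e : E} (he : e ∉ A) (w : V) :
    G.deg (insert e A) w = G.mult e w + G.deg A w :=
  Finset.sum_insert he

variable [DecidableEq E]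

lemma deg_pair {e f : E} (hef : e ≠ f) (w : V) :
    G.deg {e, f} w = G.mult e w + G.mult f w := by
  rw [deg, Finset.sum_pair hef]

lemma adjIn_symm (A : Finset E) : Symmetric (G.AdjIn A) :=
  fun _ _ ⟨ha, hb, w, h1, h2⟩ => ⟨hb, ha, w, h2, h1⟩

lemma adjIn_mono {A B : Finset E} (h : A ⊆ B) {a b : E} (hab : G.AdjIn A a b) :
    G.AdjIn B a b :=
  ⟨h hab.1, h hab.2.1, hab.2.2⟩

lemma rtg_adjIn_mono {A B : Finset E} (h : A ⊆ B) {a b : E} :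
    Relation.ReflTransGen (G.AdjIn A) a b → Relation.ReflTransGen (G.AdjIn B) a b :=
  fun hab => Relation.ReflTransGen.mono (fun _ _ => adjIn_mono h) _ _ hab

/-- A cycle containing a loop edge is that single loop. -/
lemma IsCycle.eq_singleton_of_loop {A : Finset E} (hA : G.IsCycle A) {e : E}
    (he : e ∈ A) (hl : G.IsLoopEdge e) : A = {e} := by
  obtain ⟨u, hu⟩ : ∃ u, G.ends e = s(u, u) := by
    obtain ⟨u, hu⟩ := (⟨_, Sym2.diag_diagElem hl⟩ : ∃ u, Sym2.diag u = G.ends e)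
    exact ⟨u, hu.symm⟩
  have hmu : G.mult e u = 2 := mult_diag' hu
  have hdeg : G.deg A u = 2 := by
    rcases hA.2.2 u with h0 | h2
    · exfalso
      have : G.mult e u ≤ G.deg A u := Finset.single_le_sum (f := fun f => G.mult f u) (fun _ _ => Nat.zero_le _) he
      omega
    · exact h2
  have hother : ∀ f ∈ A, f ≠ e → ¬ G.Inc f u := by
    intro f hf hfe hinc
    have hsub : ({e, f} : Finset E) ⊆ A := by
      intro x hx
      rcases Finset.mem_insert.mp hx with rfl | hx
      · exact he
      · rw [Finset.mem_singleton.mp hx]; exact hf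
    have : G.deg {e, f} u ≤ G.deg A u :=
      Finset.sum_le_sum_of_subset hsub
    rw [deg_pair (Ne.symm hfe)] at this
    have := one_le_mult_of_inc hinc
    omega
  have hreach : ∀ f, Relation.ReflTransGen (G.AdjIn A) e f → f = e := by
    intro f hf
    induction hf with
    | refl => rfl
    | tail _ hstep ih =>
      subst ih
      obtain ⟨_, hc, w, hw1, hw2⟩ := hstep
      have hwu : w = u := by
        rw [Inc, hu, Sym2.mem_iff] at hw1
        tauto
      subst hwu
      by_contra hne
      exact hother _ hc hne hw2
  apply Finset.Subset.antisymm
  · intro f hf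
    rw [Finset.mem_singleton]
    exact hreach f (hA.2.1 e he f hf)
  · intro f hf
    rw [Finset.mem_singleton.mp hf]; exact he

lemma isCycle_singleton_loop {e : E} {u : V} (h : G.ends e = s(u, u)) :
    G.IsCycle {e} := by
  refine ⟨⟨e, Finset.mem_singleton_self e⟩, ?_, ?_⟩
  · intro a ha b hb
    rw [Finset.mem_singleton.mp ha, Finset.mem_singleton.mp hb]
  · intro y
    rw [deg_singleton]
    by_cases hy : y = u
    · subst hy; right; exact mult_diag' h
    · left
      exact mult_eq_zero_of_not_inc (by rw [Inc, h, Sym2.mem_iff]; tauto)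

end Multigraph

end AuxMultigraph
section AuxPath

namespace Multigraph

variable {V E : Type*} [DecidableEq E] {G : Multigraph V E}

variable (G) in
/-- A nonempty path in the edge set `A` from `u` to `z`, visiting (after `u`) the
vertices `vs` (ending with `z`) along the distinct edges `es`. -/
inductive GPath (A : Finset E) : V → V → List V → List E → Prop
  | single {u x : V} {e : E} (he : e ∈ A) (hends : G.ends e = s(u, x)) (hux : u ≠ x) :
      GPath A u x [x] [e]
  | cons {u x z : V} {vs : List V} {es : List E} {e : E} (he : e ∈ A)
      (hends : G.ends e = s(u, x)) (hp : GPath A x z vs es) (hu : u ∉ x :: vs) :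
      GPath A u z (x :: vs) (e :: es)

namespace GPath

variable {A : Finset E} {u z : V} {vs : List V} {es : List E}

lemma last_mem (hp : G.GPath A u z vs es) : z ∈ vs := by
  induction hp with
  | single => simp
  | cons _ _ _ _ ih => exact List.mem_cons_of_mem _ ih

lemma start_not_mem (hp : G.GPath A u z vs es) : u ∉ vs := by
  cases hp with
  | single _ _ hux => simpa using hux
  | cons _ _ _ hu => exact hu

lemma start_ne_last (hp : G.GPath A u z vs es) : u ≠ z :=
  fun h => hp.start_not_mem (h ▸ hp.last_mem)

lemma edges_mem (hp : G.GPath A u z vs es) : ∀ e ∈ es, e ∈ A := by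
  induction hp with
  | single he => simpa using he
  | cons he _ _ _ ih =>
    intro f hf
    rcases List.mem_cons.mp hf with rfl | hf
    · exact he
    · exact ih f hf

lemma ends_mem (hp : G.GPath A u z vs es) :
    ∀ e' ∈ es, ∀ y, y ∈ G.ends e' → y = u ∨ y ∈ vs := by
  induction hp with
  | single _ hends =>
    intro e' he' y hy
    rw [List.mem_singleton.mp he', hends, Sym2.mem_iff] at hy
    simpa using hy
  | cons _ hends _ _ ih =>
    intro e' he' y hy
    rcases List.mem_cons.mp he' with rfl | he'
    · rw [hends, Sym2.mem_iff] at hy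
      rcases hy with rfl | rfl
      · exact Or.inl rfl
      · exact Or.inr (List.mem_cons_self)
    · rcases ih e' he' y hy with rfl | h
      · exact Or.inr (List.mem_cons_self)
      · exact Or.inr (List.mem_cons_of_mem _ h)

lemma head_of_inc_start (hp : G.GPath A u z vs es) :
    ∀ e' ∈ es, G.Inc e' u → es.head? = some e' := by
  induction hp with
  | single => intro e' he'; rw [List.mem_singleton.mp he']; intro _; rfl
  | @cons u' x' z' vs' es' e' _ _ hp' hu ih =>
    intro f hf hinc
    rcases List.mem_cons.mp hf with rfl | hf
    · rfl
    · exfalso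
      rcases hp'.ends_mem f hf u' hinc with h | h
      · exact hu (h ▸ List.mem_cons_self)
      · exact hu (List.mem_cons_of_mem _ h)

lemma head_inc_start (hp : G.GPath A u z vs es) :
    ∃ e₀, es.head? = some e₀ ∧ e₀ ∈ es ∧ G.Inc e₀ u := by
  cases hp with
  | single he hends => exact ⟨_, rfl, List.mem_singleton_self _, by
      rw [Inc, hends]; exact Sym2.mem_mk_left _ _⟩
  | cons he hends hp' hu => exact ⟨_, rfl, List.mem_cons_self, by
      rw [Inc, hends]; exact Sym2.mem_mk_left _ _⟩

lemma edges_nodup (hp : G.GPath A u z vs es) : es.Nodup := by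
  induction hp with
  | single => simp
  | @cons u' x' z' vs' es' e' _ hends hp' hu ih =>
    refine List.nodup_cons.mpr ⟨?_, ih⟩
    intro hmem
    have hue : u' ∈ G.ends e' := by rw [hends]; exact Sym2.mem_mk_left _ _
    rcases hp'.ends_mem _ hmem u' hue with h | h
    · exact hu (h ▸ List.mem_cons_self)
    · exact hu (List.mem_cons_of_mem _ h)

lemma length_le (hp : G.GPath A u z vs es) : es.length ≤ A.card := by
  calc es.length = es.toFinset.card := (List.toFinset_card_of_nodup hp.edges_nodup).symm
  _ ≤ A.card := Finset.card_le_card (fun e he => hp.edges_mem e (List.mem_toFinset.mp he))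

lemma deg_spec (hp : G.GPath A u z vs es) :
    G.deg es.toFinset u = 1 ∧ G.deg es.toFinset z = 1 ∧
      (∀ y ∈ vs, y ≠ z → G.deg es.toFinset y = 2) ∧
      (∀ y, y ≠ u → y ∉ vs → G.deg es.toFinset y = 0) := by
  induction hp with
  | single _ hends hux =>
    simp only [List.toFinset_cons, List.toFinset_nil, LawfulSingleton.insert_empty_eq]
    refine ⟨?_, ?_, ?_, ?_⟩
    · rw [deg_singleton]; exact mult_pair_left hends hux
    · rw [deg_singleton]; exact mult_pair_right hends hux
    · intro y hy hyz; exact absurd (List.mem_singleton.mp hy) hyz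
    · intro y hyu hyv
      rw [deg_singleton]
      exact mult_pair_other hends hyu (fun h => hyv (h ▸ List.mem_singleton_self _))
  | @cons u x z vs es e _ hends hp' hu ih =>
    have hxne : u ≠ x := fun h => hu (h ▸ List.mem_cons_self)
    have huvs : u ∉ vs := fun h => hu (List.mem_cons_of_mem _ h)
    have hxvs : x ∉ vs := hp'.start_not_mem
    have hzvs : z ∈ vs := hp'.last_mem
    have hzx : z ≠ x := fun h => hxvs (h ▸ hzvs)
    have hzu : z ≠ u := fun h => huvs (h ▸ hzvs)
    have henotin : e ∉ es := by
      intro hmem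
      have hue : u ∈ G.ends e := by rw [hends]; exact Sym2.mem_mk_left _ _
      rcases hp'.ends_mem _ hmem u hue with h | h
      · exact hxne h
      · exact huvs h
    have henotin' : e ∉ es.toFinset := fun h => henotin (List.mem_toFinset.mp h)
    have hdeg : ∀ y, G.deg (e :: es).toFinset y = G.mult e y + G.deg es.toFinset y := by
      intro y
      rw [List.toFinset_cons]; exact Finset.sum_insert henotin'
    refine ⟨?_, ?_, ?_, ?_⟩
    · rw [hdeg, mult_pair_left hends hxne, ih.2.2.2 u hxne huvs]
    · rw [hdeg, mult_pair_other hends hzu hzx, ih.2.1]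
    · intro y hy hyz
      rcases List.mem_cons.mp hy with rfl | hy
      · rw [hdeg, mult_pair_right hends hxne, ih.1]
      · have hyu : y ≠ u := fun h => huvs (h ▸ hy)
        have hyx : y ≠ x := fun h => hxvs (h ▸ hy)
        rw [hdeg, mult_pair_other hends hyu hyx, ih.2.2.1 y hy hyz]
    · intro y hyu hyv
      have hyx : y ≠ x := fun h => hyv (h ▸ List.mem_cons_self)
      have hyvs : y ∉ vs := fun h => hyv (List.mem_cons_of_mem _ h)
      rw [hdeg, mult_pair_other hends hyu hyx, ih.2.2.2 y hyx hyvs]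

lemma conn (hp : G.GPath A u z vs es) :
    ∀ a ∈ es, ∀ b ∈ es, Relation.ReflTransGen (G.AdjIn es.toFinset) a b := by
  induction hp with
  | single =>
    intro a ha b hb
    rw [List.mem_singleton.mp ha, List.mem_singleton.mp hb]
  | @cons u x z vs es e he hends hp' hu ih =>
    intro a ha b hb
    have hsub : es.toFinset ⊆ (e :: es).toFinset := by
      intro f hf; simp only [List.toFinset_cons, Finset.mem_insert]; right; exact hf
    have hclaim : ∀ c ∈ es, Relation.ReflTransGen (G.AdjIn (e :: es).toFinset) e c := by
      intro c hc
      obtain ⟨e₂, _, he₂mem, he₂inc⟩ := hp'.head_inc_start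
      have hstep : G.AdjIn (e :: es).toFinset e e₂ := by
        refine ⟨by simp, hsub (List.mem_toFinset.mpr he₂mem), x, ?_, he₂inc⟩
        rw [Inc, hends]; exact Sym2.mem_mk_right _ _
      exact (Relation.ReflTransGen.single hstep).trans
        (rtg_adjIn_mono hsub (ih e₂ he₂mem c hc))
    have hsymm : Symmetric (Relation.ReflTransGen (G.AdjIn (e :: es).toFinset)) :=
      fun _ _ h => @Std.Symm.symm _ _ (@Relation.ReflTransGen.symmetric _ _ ⟨fun _ _ h => adjIn_symm _ h⟩) _ _ h
    have key : ∀ c ∈ e :: es, Relation.ReflTransGen (G.AdjIn (e :: es).toFinset) e c := by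
      intro c hc
      rcases List.mem_cons.mp hc with h | h
      · exact h ▸ Relation.ReflTransGen.refl
      · exact hclaim c h
    exact (hsymm (key a ha)).trans (key b hb)

lemma prefixPath (hp : G.GPath A u z vs es) :
    ∀ z' ∈ vs, ∃ vs₁ es₁, G.GPath A u z' vs₁ es₁ ∧ (∀ y ∈ vs₁, y ∈ vs) ∧
      (∀ e' ∈ es₁, e' ∈ es) ∧ es₁.head? = es.head? := by
  induction hp with
  | @single u x e he hends hux =>
    intro z' hz'
    rw [List.mem_singleton.mp hz']
    exact ⟨[x], [e], GPath.single he hends hux, by simp, by simp, rfl⟩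
  | @cons u x z vs es e he hends hp' hu ih =>
    intro z' hz'
    rcases List.mem_cons.mp hz' with rfl | hz'
    · refine ⟨[z'], [e], GPath.single he hends ?_, by simp, by simp, rfl⟩
      exact fun h => hu (h ▸ List.mem_cons_self)
    · obtain ⟨vs₁, es₁, hq, hvsub, hesub, _⟩ := ih z' hz'
      refine ⟨x :: vs₁, e :: es₁, GPath.cons he hends hq ?_, ?_, ?_, rfl⟩
      · intro hmem
        rcases List.mem_cons.mp hmem with rfl | hmem
        · exact hu (List.mem_cons_self)
        · exact hu (List.mem_cons_of_mem _ (hvsub _ hmem))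
      · intro y hy
        rcases List.mem_cons.mp hy with rfl | hy
        · exact List.mem_cons_self
        · exact List.mem_cons_of_mem _ (hvsub _ hy)
      · intro e' he'
        rcases List.mem_cons.mp he' with rfl | he'
        · exact List.mem_cons_self
        · exact List.mem_cons_of_mem _ (hesub _ he')

end GPath

/-- A path together with a chord joining its endpoints forms a cycle. -/
lemma isCycle_of_chord {A : Finset E} {u z : V} {vs : List V} {es : List E}
    (hp : G.GPath A u z vs es) {f : E} (hfe : G.ends f = s(u, z))
    (hfnot : f ∉ es) : G.IsCycle (insert f es.toFinset) := by
  have huz : u ≠ z := hp.start_ne_last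
  obtain ⟨hdu, hdz, hdmid, hdout⟩ := hp.deg_spec
  have hfnot' : f ∉ es.toFinset := fun h => hfnot (List.mem_toFinset.mp h)
  have hdeg : ∀ y, G.deg (insert f es.toFinset) y = G.mult f y + G.deg es.toFinset y := by
    intro y
    exact Finset.sum_insert hfnot'
  refine ⟨⟨f, Finset.mem_insert_self _ _⟩, ?_, ?_⟩
  · -- connectivity
    obtain ⟨e₀, _, he₀mem, he₀inc⟩ := hp.head_inc_start
    have hsub : es.toFinset ⊆ insert f es.toFinset := Finset.subset_insert _ _
    have hstep : G.AdjIn (insert f es.toFinset) f e₀ :=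
      ⟨Finset.mem_insert_self _ _, hsub (List.mem_toFinset.mpr he₀mem), u,
        by rw [Inc, hfe]; exact Sym2.mem_mk_left _ _, he₀inc⟩
    have hreach : ∀ a ∈ insert f es.toFinset,
        Relation.ReflTransGen (G.AdjIn (insert f es.toFinset)) f a := by
      intro a ha
      rcases Finset.mem_insert.mp ha with rfl | ha
      · exact Relation.ReflTransGen.refl
      · exact (Relation.ReflTransGen.single hstep).trans
          (rtg_adjIn_mono hsub (hp.conn e₀ he₀mem a (List.mem_toFinset.mp ha)))
    have hsymm : Symmetric (Relation.ReflTransGen (G.AdjIn (insert f es.toFinset))) :=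
      fun _ _ h => @Std.Symm.symm _ _ (@Relation.ReflTransGen.symmetric _ _ ⟨fun _ _ h => adjIn_symm _ h⟩) _ _ h
    intro a ha b hb
    exact (hsymm (hreach a ha)).trans (hreach b hb)
  · intro y
    by_cases hyu : y = u
    · subst hyu; right; rw [hdeg, mult_pair_left hfe huz, hdu]
    by_cases hyz : y = z
    · subst hyz; right; rw [hdeg, mult_pair_right hfe huz, hdz]
    by_cases hyvs : y ∈ vs
    · right
      rw [hdeg, mult_pair_other hfe hyu hyz, hdmid y hyvs hyz]
    · left
      rw [hdeg, mult_pair_other hfe hyu hyz, hdout y hyu hyvs]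

end Multigraph

end AuxPath
section AuxDecomp

namespace Multigraph

variable {V E : Type*} [DecidableEq E] {G : Multigraph V E}

/-- Every nonempty edge set with all degrees even contains a cycle. -/
lemma exists_cycle_of_even {A : Finset E} (hne : A.Nonempty)
    (hev : ∀ w, Even (G.deg A w)) : ∃ C ⊆ A, G.IsCycle C := by
  by_cases hloop : ∃ e ∈ A, G.IsLoopEdge e
  · obtain ⟨e, he, hl⟩ := hloop
    obtain ⟨u, hu⟩ : ∃ u, G.ends e = s(u, u) := by
      obtain ⟨u, hu⟩ := (⟨_, Sym2.diag_diagElem hl⟩ : ∃ u, Sym2.diag u = G.ends e)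
      exact ⟨u, hu.symm⟩
    exact ⟨{e}, Finset.singleton_subset_iff.mpr he, isCycle_singleton_loop hu⟩
  push_neg at hloop
  obtain ⟨e₀, he₀⟩ := hne
  obtain ⟨a, b, hab⟩ : ∃ a b, G.ends e₀ = s(a, b) := by
    rcases Sym2.exists.mp ⟨G.ends e₀, rfl⟩ with ⟨a, b, h⟩
    exact ⟨a, b, h⟩
  have haneb : a ≠ b := by
    intro h
    exact hloop e₀ he₀ (by rw [IsLoopEdge, hab, h]; exact Sym2.mk_isDiag_iff.mpr rfl)
  -- maximal path length
  set P : ℕ → Prop := fun n => ∃ u z vs es, G.GPath A u z vs es ∧ es.length = n with hP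
  have hP1 : P 1 := ⟨a, b, [b], [e₀], GPath.single he₀ hab haneb, rfl⟩
  have hbound : ∀ n, P n → n ≤ A.card := by
    rintro n ⟨u, z, vs, es, hp, rfl⟩
    exact hp.length_le
  have hcard1 : 1 ≤ A.card := Finset.card_pos.mpr ⟨e₀, he₀⟩
  set N := Nat.findGreatest P A.card with hN
  have hPN : P N := Nat.findGreatest_spec hcard1 hP1
  have hN1 : 1 ≤ N := Nat.le_findGreatest hcard1 hP1
  obtain ⟨u, z, vs, es, hp, hlen⟩ := hPN
  obtain ⟨e₁, he₁h, he₁mem, he₁inc⟩ := hp.head_inc_start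
  -- find a second edge at u
  have he₁A : e₁ ∈ A := hp.edges_mem _ he₁mem
  have hdegu : 2 ≤ G.deg A u := by
    have h1 : 1 ≤ G.mult e₁ u := one_le_mult_of_inc he₁inc
    have h2 : G.mult e₁ u ≤ G.deg A u :=
      Finset.single_le_sum (f := fun f => G.mult f u) (fun _ _ => Nat.zero_le _) he₁A
    rcases hev u with ⟨k, hk⟩
    omega
  obtain ⟨f, hfA, hfne, hfinc⟩ : ∃ f ∈ A, f ≠ e₁ ∧ G.Inc f u := by
    by_contra hcon
    push_neg at hcon
    have hdeq : G.deg A u = G.mult e₁ u := by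
      refine Finset.sum_eq_single_of_mem _ he₁A ?_
      intro f hf hfne
      exact mult_eq_zero_of_not_inc (hcon f hf hfne)
    have hle : G.mult e₁ u ≤ 1 := by
      rw [mult, if_neg, ]
      · split_ifs <;> omega
      · intro hd
        exact hloop e₁ he₁A (by rw [IsLoopEdge, hd]; exact Sym2.diag_isDiag u)
    omega
  obtain ⟨z', hz'⟩ : ∃ z', G.ends f = s(u, z') := Sym2.mem_iff_exists.mp hfinc
  have huz' : u ≠ z' := by
    intro h
    exact hloop f hfA (by rw [IsLoopEdge, hz', ← h]; exact Sym2.mk_isDiag_iff.mpr rfl)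
  by_cases hz'mem : z' ∈ u :: vs
  · -- chord: build cycle from prefix of the path
    have hz'vs : z' ∈ vs := by
      rcases List.mem_cons.mp hz'mem with h | h
      · exact absurd h.symm huz'
      · exact h
    obtain ⟨vs₁, es₁, hq, _, hesub, hhead⟩ := hp.prefixPath z' hz'vs
    have hfnot : f ∉ es₁ := by
      intro hmem
      have := hq.head_of_inc_start f hmem hfinc
      rw [hhead, he₁h] at this
      exact hfne (Option.some_injective _ this.symm)
    refine ⟨insert f es₁.toFinset, ?_, isCycle_of_chord hq hz' hfnot⟩
    intro x hx
    rcases Finset.mem_insert.mp hx with rfl | hx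
    · exact hfA
    · exact hp.edges_mem _ (hesub _ (List.mem_toFinset.mp hx))
  · -- extend the path: contradiction with maximality
    exfalso
    have hq : G.GPath A z' z (u :: vs) (f :: es) :=
      GPath.cons hfA (by rw [hz', Sym2.eq_swap]) hp hz'mem
    have : N + 1 ≤ N := by
      have hPn : P (N + 1) := ⟨z', z, u :: vs, f :: es, hq, by simp [hlen]⟩
      exact Nat.le_findGreatest (hq.length_le.trans_eq' (by simp [hlen])) hPn
    omega

lemma even_deg_of_isCycle {C : Finset E} (hC : G.IsCycle C) (w : V) :
    Even (G.deg C w) := by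
  rcases hC.2.2 w with h | h <;> rw [h] <;> decide

/-- Every edge set with all degrees even is the symmetric difference of a list of
cycles contained in it. -/
lemma exists_cycle_decomp :
    ∀ (n : ℕ) (A : Finset E), A.card ≤ n → (∀ w, Even (G.deg A w)) →
      ∃ L : List (Finset E), (∀ C ∈ L, C ⊆ A ∧ G.IsCycle C) ∧ A = listSymmDiff L := by
  intro n
  induction n with
  | zero =>
    intro A hcard _
    have : A = ∅ := Finset.card_eq_zero.mp (Nat.le_zero.mp hcard)
    exact ⟨[], by simp, by simp [this, listSymmDiff]⟩
  | succ n ih =>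
    intro A hcard hev
    rcases Finset.eq_empty_or_nonempty A with rfl | hne
    · exact ⟨[], by simp, by simp [listSymmDiff]⟩
    obtain ⟨C, hCA, hC⟩ := exists_cycle_of_even hne hev
    have hCne : C.Nonempty := hC.1
    have hlt : (A \ C).card < A.card :=
      Finset.card_lt_card (Finset.sdiff_ssubset hCA hCne)
    have hdeg : ∀ w, G.deg (A \ C) w + G.deg C w = G.deg A w := fun w =>
      Finset.sum_sdiff hCA
    have hev' : ∀ w, Even (G.deg (A \ C) w) := by
      intro w
      have h1 := hev w
      have h2 := even_deg_of_isCycle hC w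
      have h3 := hdeg w
      rcases h1 with ⟨k, hk⟩; rcases h2 with ⟨l, hl⟩
      exact ⟨k - l, by omega⟩
    obtain ⟨L, hL, hLd⟩ := ih (A \ C) (by omega) hev'
    refine ⟨C :: L, ?_, ?_⟩
    · intro D hD
      rcases List.mem_cons.mp hD with rfl | hD
      · exact ⟨hCA, hC⟩
      · exact ⟨(hL D hD).1.trans (Finset.sdiff_subset), (hL D hD).2⟩
    · show A = C ∆ listSymmDiff L
      rw [← hLd]
      ext x
      simp only [Finset.mem_symmDiff, Finset.mem_sdiff]
      constructor
      · intro hx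
        by_cases hxC : x ∈ C
        · exact Or.inl ⟨hxC, fun h => h.2 hxC⟩
        · exact Or.inr ⟨⟨hx, hxC⟩, hxC⟩
      · rintro (⟨hx, _⟩ | ⟨⟨hx, _⟩, _⟩)
        · exact hCA hx
        · exact hx

end Multigraph

end AuxDecomp
section AuxParity

lemma natCast_zmodTwo (n : ℕ) : ((n : ZMod 2)) = if Odd n then 1 else 0 := by
  have h0 : ((n : ZMod 2)) = ((n % 2 : ℕ) : ZMod 2) := (ZMod.natCast_mod n 2).symm
  rw [h0]
  rcases Nat.even_or_odd n with h | h
  · rw [Nat.even_iff.mp h, if_neg (by simpa [Nat.not_odd_iff_even] using h)]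
    simp
  · rw [Nat.odd_iff.mp h, if_pos h]
    simp

lemma odd_iff_natCast_zmodTwo (n : ℕ) : Odd n ↔ ((n : ZMod 2)) = 1 := by
  rw [natCast_zmodTwo]
  split_ifs with h
  · simp [h]
  · simp [h]

lemma even_iff_natCast_zmodTwo (n : ℕ) : Even n ↔ ((n : ZMod 2)) = 0 := by
  rw [natCast_zmodTwo, ← Nat.not_odd_iff_even]
  split_ifs with h
  · simp [h]
  · simp [h]

lemma listSymmDiff_nil {E : Type*} [DecidableEq E] :
    listSymmDiff ([] : List (Finset E)) = ∅ := rfl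

lemma listSymmDiff_cons {E : Type*} [DecidableEq E] (a : Finset E) (L : List (Finset E)) :
    listSymmDiff (a :: L) = a ∆ listSymmDiff L := rfl

lemma listSymmDiff_append {E : Type*} [DecidableEq E] (L₁ L₂ : List (Finset E)) :
    listSymmDiff (L₁ ++ L₂) = listSymmDiff L₁ ∆ listSymmDiff L₂ := by
  induction L₁ with
  | nil =>
    rw [List.nil_append, listSymmDiff_nil]
    exact (bot_symmDiff _).symm
  | cons a L ih =>
    rw [List.cons_append, listSymmDiff_cons, listSymmDiff_cons, ih, symmDiff_assoc]

lemma filter_symmDiff' {E : Type*} [DecidableEq E] (p : E → Prop) [DecidablePred p]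
    (s t : Finset E) : (s ∆ t).filter p = s.filter p ∆ t.filter p := by
  ext x
  simp only [Finset.mem_filter, Finset.mem_symmDiff]
  tauto

lemma odd_card_symmDiff {E : Type*} [DecidableEq E] (s t : Finset E) :
    Odd (s ∆ t).card ↔ (Odd s.card ↔ ¬ Odd t.card) := by
  have h1 : s ∆ t = (s ∪ t) \ (s ∩ t) := by
    ext x
    simp only [Finset.mem_symmDiff, Finset.mem_sdiff, Finset.mem_union, Finset.mem_inter]
    tauto
  have h2 : (s ∩ t) ⊆ (s ∪ t) := (Finset.inter_subset_left).trans Finset.subset_union_left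
  have h3 : (s ∆ t).card = (s ∪ t).card - (s ∩ t).card := by
    rw [h1, Finset.card_sdiff_of_subset h2]
  have h4 : (s ∪ t).card + (s ∩ t).card = s.card + t.card :=
    Finset.card_union_add_card_inter s t
  have h5 : (s ∩ t).card ≤ (s ∪ t).card := Finset.card_le_card h2
  rw [Nat.odd_iff, Nat.odd_iff, Nat.odd_iff, h3]
  omega

end AuxParity
section AuxVDel

namespace VDeletion

variable {V E E' : Type*} [DecidableEq V] [DecidableEq E] [DecidableEq E'] [Fintype E]
  (D : VDeletion V E E')

lemma mem_pullSet {F : Finset E'} {x : E} :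
    x ∈ D.pullSet F ↔ Odd ((F.filter fun eh => x ∈ D.pull eh).card) := by
  simp [pullSet]

lemma pullSet_empty : D.pullSet (∅ : Finset E') = ∅ := by
  ext x; simp [mem_pullSet]

lemma pullSet_symmDiff (F₁ F₂ : Finset E') :
    D.pullSet (F₁ ∆ F₂) = D.pullSet F₁ ∆ D.pullSet F₂ := by
  ext x
  rw [Finset.mem_symmDiff]
  simp only [mem_pullSet]
  rw [filter_symmDiff', odd_card_symmDiff]
  tauto

lemma pullSet_listSymmDiff (L : List (Finset E')) :
    D.pullSet (listSymmDiff L) = listSymmDiff (L.map D.pullSet) := by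
  induction L with
  | nil => rw [listSymmDiff_nil, List.map_nil, listSymmDiff_nil, pullSet_empty]
  | cons X L ih =>
    rw [listSymmDiff_cons, pullSet_symmDiff, ih, List.map_cons, listSymmDiff_cons]

lemma deg_pullSet_cast (F : Finset E') (y : V) :
    ((D.Ω.G.deg (D.pullSet F) y : ℕ) : ZMod 2) =
      ∑ eh ∈ F, ((D.Ω.G.deg (D.pull eh) y : ℕ) : ZMod 2) := by
  have lhs : ((D.Ω.G.deg (D.pullSet F) y : ℕ) : ZMod 2)
      = ∑ e ∈ Finset.univ, (if Odd ((F.filter fun eh => e ∈ D.pull eh).card)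
          then ((D.Ω.G.mult e y : ℕ) : ZMod 2) else 0) := by
    rw [Multigraph.deg, Nat.cast_sum, pullSet, Finset.sum_filter]
  have rhs : ∑ eh ∈ F, ((D.Ω.G.deg (D.pull eh) y : ℕ) : ZMod 2)
      = ∑ e ∈ Finset.univ, (((F.filter fun eh => e ∈ D.pull eh).card : ZMod 2))
          * ((D.Ω.G.mult e y : ℕ) : ZMod 2) := by
    calc ∑ eh ∈ F, ((D.Ω.G.deg (D.pull eh) y : ℕ) : ZMod 2)
        = ∑ eh ∈ F, ∑ e ∈ D.pull eh, ((D.Ω.G.mult e y : ℕ) : ZMod 2) := by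
          refine Finset.sum_congr rfl fun eh _ => ?_
          rw [Multigraph.deg, Nat.cast_sum]
      _ = ∑ eh ∈ F, ∑ e ∈ Finset.univ,
            (if e ∈ D.pull eh then ((D.Ω.G.mult e y : ℕ) : ZMod 2) else 0) := by
          refine Finset.sum_congr rfl fun eh _ => ?_
          rw [Finset.sum_ite_mem, Finset.univ_inter]
      _ = ∑ e ∈ Finset.univ, ∑ eh ∈ F,
            (if e ∈ D.pull eh then ((D.Ω.G.mult e y : ℕ) : ZMod 2) else 0) :=
          Finset.sum_comm
      _ = ∑ e ∈ Finset.univ, (((F.filter fun eh => e ∈ D.pull eh).card : ZMod 2))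
            * ((D.Ω.G.mult e y : ℕ) : ZMod 2) := by
          refine Finset.sum_congr rfl fun e _ => ?_
          rw [Finset.sum_ite, Finset.sum_const, Finset.sum_const_zero, add_zero, nsmul_eq_mul]
  rw [lhs, rhs]
  refine Finset.sum_congr rfl fun e _ => ?_
  rw [natCast_zmodTwo ((F.filter fun eh => e ∈ D.pull eh).card)]
  split_ifs with h
  · rw [one_mul]
  · rw [zero_mul]

lemma deg_pull_cast {eh : E'} (hnl : ¬ D.Ωhat.G.IsLoopEdge eh) (y : V) :
    ((D.Ω.G.deg (D.pull eh) y : ℕ) : ZMod 2) = ((D.Ωhat.G.mult eh y : ℕ) : ZMod 2) := by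
  rcases D.edges_covered eh with ⟨e, rfl⟩ | ⟨i, j, hij, hv, rfl⟩
  · rw [D.pull_old, Multigraph.deg_singleton,
      Multigraph.mult_eq_of_ends_eq (D.old_ends e).symm y]
  · have hwi : D.w i ≠ D.v := by
      intro h
      apply hnl
      rw [Multigraph.IsLoopEdge, D.ehat_ends i j hij hv, if_pos h]
      exact Sym2.mk_isDiag_iff.mpr rfl
    have hwj : D.w j ≠ D.v := by
      intro h
      apply hnl
      rw [Multigraph.IsLoopEdge, D.ehat_ends i j hij hv, if_neg hwi, if_pos h]
      exact Sym2.mk_isDiag_iff.mpr rfl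
    have hww : D.w i ≠ D.w j := by
      intro h
      apply hnl
      rw [Multigraph.IsLoopEdge, D.ehat_ends i j hij hv, if_neg hwi, if_neg hwj, h]
      exact Sym2.mk_isDiag_iff.mpr rfl
    have hends : D.Ωhat.G.ends (D.ehat i j) = s(D.w i, D.w j) := by
      rw [D.ehat_ends i j hij hv, if_neg hwi, if_neg hwj]
    have hevne : D.ev i ≠ D.ev j := fun h => hij (D.ev_inj h)
    rw [D.pull_ehat i j hij hv, Multigraph.deg_pair hevne]
    have hi := D.ev_ends i
    have hj := D.ev_ends j
    by_cases hyv : y = D.v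
    · subst hyv
      rw [Multigraph.mult_pair_left hi (Ne.symm hwi), Multigraph.mult_pair_left hj (Ne.symm hwj),
        Multigraph.mult_eq_zero_of_not_inc (e := D.ehat i j) (u := D.v) ?_]
      · push_cast
        decide
      · rw [Multigraph.Inc, hends, Sym2.mem_iff]
        rintro (h | h)
        · exact hwi h.symm
        · exact hwj h.symm
    by_cases hyi : y = D.w i
    · subst hyi
      rw [Multigraph.mult_pair_right hi (Ne.symm hwi),
        Multigraph.mult_pair_other hj hwi hww,
        Multigraph.mult_pair_left hends hww]
    by_cases hyj : y = D.w j
    · subst hyj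
      rw [Multigraph.mult_pair_other hi hwj (Ne.symm hww),
        Multigraph.mult_pair_right hj (Ne.symm hwj),
        Multigraph.mult_pair_right hends hww]
    · rw [Multigraph.mult_pair_other hi hyv hyi,
        Multigraph.mult_pair_other hj hyv hyj,
        Multigraph.mult_pair_other hends hyi hyj]

lemma even_deg_pullSet_of_mem_Ahat' {X : Finset E'} (hX : X ∈ D.Ahat') (y : V) :
    Even (D.Ω.G.deg (D.pullSet X) y) := by
  obtain ⟨⟨hcyc, _, _⟩, hnoloop⟩ := hX
  have hnl : ∀ eh ∈ X, ¬ D.Ωhat.G.IsLoopEdge eh := by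
    intro eh hmem hl
    exact hnoloop ⟨eh, hcyc.eq_singleton_of_loop hmem hl, hl⟩
  rw [even_iff_natCast_zmodTwo, deg_pullSet_cast,
    Finset.sum_congr rfl (fun eh h => D.deg_pull_cast (hnl eh h) y), ← Nat.cast_sum]
  have hdeg : D.Ωhat.G.deg X y = 0 ∨ D.Ωhat.G.deg X y = 2 := hcyc.2.2 y
  show ((D.Ωhat.G.deg X y : ℕ) : ZMod 2) = 0
  rcases hdeg with h | h <;> rw [h]
  · exact Nat.cast_zero
  · exact ZMod.natCast_self 2

lemma exists_balanced_decomp_of_mem_Ahat' {X : Finset E'} (hX : X ∈ D.Ahat') :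
    ∃ L : List (Finset E), (∀ P ∈ L, P ∈ D.Ω.Bal) ∧ D.pullSet X = listSymmDiff L := by
  have hev : ∀ y, Even (D.Ω.G.deg (D.pullSet X) y) :=
    fun y => D.even_deg_pullSet_of_mem_Ahat' hX y
  obtain ⟨⟨hcyc, hns, hcase⟩, hnoloop⟩ := hX
  rcases hcase with ⟨_, hbal⟩ | hempty | ⟨_, _, hallbal⟩
  · refine ⟨[D.pullSet X], by simpa using hbal, ?_⟩
    rw [listSymmDiff_cons, listSymmDiff_nil]
    ext x
    simp [Finset.mem_symmDiff]
  · exact ⟨[], by simp, by rw [hempty, listSymmDiff_nil]⟩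
  · obtain ⟨L, hL, hLd⟩ :=
      Multigraph.exists_cycle_decomp (D.pullSet X).card (D.pullSet X) le_rfl hev
    exact ⟨L, fun P hP => hallbal P (hL P hP).1 (hL P hP).2, hLd⟩

lemma exists_balanced_decomp_list (L : List (Finset E')) (hL : ∀ X ∈ L, X ∈ D.Ahat') :
    ∃ M : List (Finset E), (∀ P ∈ M, P ∈ D.Ω.Bal) ∧
      listSymmDiff (L.map D.pullSet) = listSymmDiff M := by
  induction L with
  | nil => exact ⟨[], by simp, by simp⟩
  | cons X L ih =>
    obtain ⟨M', hM', hM'd⟩ := ih fun Y hY => hL Y (List.mem_cons_of_mem _ hY)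
    obtain ⟨LX, hLX, hLXd⟩ :=
      D.exists_balanced_decomp_of_mem_Ahat' (hL X (List.mem_cons_self))
    refine ⟨LX ++ M', ?_, ?_⟩
    · intro P hP
      rcases List.mem_append.mp hP with h | h
      · exact hLX P h
      · exact hM' P h
    · rw [List.map_cons, listSymmDiff_cons, listSymmDiff_append, ← hLXd, ← hM'd]

end VDeletion

end AuxVDel
/-- Let `Ω = (G,𝒞)` be a linear biased graph with no balanced loops, `v` a vertex, and
`Ω̂ = (Ĝ, 𝒞̂)` the `v`-deleted biased graph (so that `𝒞̂` is the linear completion of the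
collection `𝒜̂'`).  Then for every cycle `Ĉ` of `Ĝ`, if the pull-back `𝔈(Ĉ)` is an
unbalanced cycle of `Ω`, then `Ĉ` is an unbalanced cycle of `Ω̂`. -/
theorem pullback_unbalanced_of_unbalanced {V E E' : Type*}
    [DecidableEq V] [DecidableEq E] [DecidableEq E'] [Fintype E]
    (D : VDeletion V E E')
    (hnoballoop : ∀ e : E, D.Ω.G.IsLoopEdge e → ({e} : Finset E) ∉ D.Ω.Bal)
    (hbal_spec : ∀ Ch : Finset E', Ch ∈ D.Ωhat.Bal ↔
      (D.Ωhat.G.IsCycle Ch ∧ ∃ L : List (Finset E'),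
        (∀ X ∈ L, X ∈ D.Ahat') ∧ Ch = listSymmDiff L))
    (Ch : Finset E') (hCh : D.Ωhat.G.IsCycle Ch)
    (hpullcyc : D.Ω.G.IsCycle (D.pullSet Ch))
    (hpullunbal : D.pullSet Ch ∉ D.Ω.Bal) :
    Ch ∉ D.Ωhat.Bal := by
  intro hmem
  obtain ⟨_, L, hLA, hChd⟩ := (hbal_spec Ch).mp hmem
  obtain ⟨M, hM, hMd⟩ := D.exists_balanced_decomp_list L hLA
  have hkey : D.pullSet Ch = listSymmDiff M := by
    rw [hChd, D.pullSet_listSymmDiff, hMd]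
  exact hpullunbal (D.Ω.linear M hM _ hpullcyc hkey)
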